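/- Let T be a tree with exactly two adjacent vertices u, v of degree ≥ 2, and let l be a non-degenerate labeling with l(u) ≤ l(v). Then for any vertex w ≠ u and any vertex z with z ∉ {u, w}, one has d_l(u,w) ≤ d_l(z,w). -/

import Mathlib

open SimpleGraph

open scoped Classical in
/-- The distance induced by a vertex labeling `l` on a tree `G`: `0` on the
diagonal, and otherwise the maximum of `l` over the vertices of the unique
path joining the two points. -/
noncomputable def treeDist {V : Type*} {G : SimpleGraph V} (hG : G.IsTree)
    (l : V → NNReal) (u v : V) : NNReal :=
  if u = v then 0
  else (((hG.existsUnique_path u v).choose.support).map l).foldr max 0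

/-- A labeling is non-degenerate if `max (l u) (l v) > 0` for every edge `{u, v}`. -/
def Nondeg {V : Type*} (G : SimpleGraph V) (l : V → NNReal) : Prop :=
  ∀ u v, G.Adj u v → 0 < max (l u) (l v)

/-- The vertex `u` has degree at least two: it has two distinct neighbors. -/
def DegGe2 {V : Type*} (G : SimpleGraph V) (u : V) : Prop :=
  ∃ a b : V, a ≠ b ∧ G.Adj u a ∧ G.Adj u b

lemma le_foldr_max {a : NNReal} {L : List NNReal} (h : a ∈ L) : a ≤ L.foldr max 0 := by
  induction L with
  | nil => simp at h
  | cons b L ih =>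
    rcases List.mem_cons.1 h with rfl | h
    · exact le_max_left _ _
    · exact (ih h).trans (le_max_right _ _)

lemma foldr_max_le {c : NNReal} {L : List NNReal} (h : ∀ a ∈ L, a ≤ c) :
    L.foldr max 0 ≤ c := by
  induction L with
  | nil => simp
  | cons b L ih =>
    exact max_le (h b List.mem_cons_self) (ih fun a ha => h a (List.mem_cons_of_mem _ ha))

lemma treeDist_eq {V : Type*} {G : SimpleGraph V} (hG : G.IsTree)
    (l : V → NNReal) {a b : V} (hab : a ≠ b) (p : G.Walk a b) (hp : p.IsPath) :
    treeDist hG l a b = (p.support.map l).foldr max 0 := by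
  classical
  rw [treeDist, if_neg hab,
    (hG.existsUnique_path a b).choose_spec.2 p hp]

lemma le_treeDist {V : Type*} {G : SimpleGraph V} (hG : G.IsTree)
    (l : V → NNReal) {a b x : V} (hab : a ≠ b) (p : G.Walk a b) (hp : p.IsPath)
    (hx : x ∈ p.support) : l x ≤ treeDist hG l a b := by
  rw [treeDist_eq hG l hab p hp]
  exact le_foldr_max (List.mem_map_of_mem (f := l) hx)

lemma treeDist_le {V : Type*} {G : SimpleGraph V} (hG : G.IsTree)
    (l : V → NNReal) {a b : V} {c : NNReal} (hab : a ≠ b) (p : G.Walk a b) (hp : p.IsPath)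
    (h : ∀ x ∈ p.support, l x ≤ c) : treeDist hG l a b ≤ c := by
  rw [treeDist_eq hG l hab p hp]
  refine foldr_max_le ?_
  rintro _ hm
  obtain ⟨x, hx, rfl⟩ := List.mem_map.1 hm
  exact h x hx

lemma treeDist_triangle {V : Type*} {G : SimpleGraph V} (hG : G.IsTree)
    (l : V → NNReal) {u w z : V} (huw : u ≠ w) (hzu : z ≠ u) (hzw : z ≠ w) :
    treeDist hG l u w ≤ max (treeDist hG l z u) (treeDist hG l z w) := by
  classical
  obtain ⟨pu, hpu, -⟩ := hG.existsUnique_path z u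
  obtain ⟨pw, hpw, -⟩ := hG.existsUnique_path z w
  set q := pu.reverse.append pw with hq
  refine treeDist_le hG l huw q.bypass q.bypass_isPath ?_
  intro x hx
  have hx' := q.support_bypass_subset hx
  rw [hq, Walk.mem_support_append_iff, Walk.support_reverse, List.mem_reverse] at hx'
  rcases hx' with h | h
  · exact (le_treeDist hG l hzu pu hpu h).trans (le_max_left _ _)
  · exact (le_treeDist hG l hzw pw hpw h).trans (le_max_right _ _)

theorem stmt_16 {V : Type*} {G : SimpleGraph V} (hG : G.IsTree)
    {u v : V} (huv : u ≠ v) (hadj : G.Adj u v)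
    (hu : DegGe2 G u) (hv : DegGe2 G v)
    (honly : ∀ w : V, DegGe2 G w → w = u ∨ w = v)
    (l : V → NNReal) (hl : Nondeg G l) (hluv : l u ≤ l v) :
    ∀ w z : V, w ≠ u → z ≠ u → z ≠ w →
      treeDist hG l u w ≤ treeDist hG l z w := by
  classical
  intro w z hwu hzu hzw
  have key : treeDist hG l z u ≤ treeDist hG l z w := by
    by_cases hzv : z = v
    · subst hzv
      have h1 : treeDist hG l z u ≤ l z := by
        refine treeDist_le hG l hzu (Walk.cons hadj.symm Walk.nil) ?_ ?_
        · simp [Walk.cons_isPath_iff, hzu]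
        · intro x hx
          simp only [Walk.support_cons, Walk.support_nil, List.mem_cons,
            List.mem_singleton, List.not_mem_nil, or_false] at hx
          rcases hx with rfl | rfl
          · exact le_rfl
          · exact hluv
      have h2 : l z ≤ treeDist hG l z w := by
        obtain ⟨p, hp, -⟩ := hG.existsUnique_path z w
        exact le_treeDist hG l hzw p hp p.start_mem_support
      exact h1.trans h2
    · have hz2 : ¬ DegGe2 G z := by
        intro h
        rcases honly z h with rfl | rfl
        · exact hzu rfl
        · exact hzv rfl
      have huniq : ∀ a b, G.Adj z a → G.Adj z b → a = b := by
        intro a b ha hb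
        by_contra hne
        exact hz2 ⟨a, b, hne, ha, hb⟩
      obtain ⟨pu, hpu, -⟩ := hG.existsUnique_path z u
      cases pu with
      | nil => exact absurd rfl hzu
      | @cons _ n _ h q =>
        -- h : G.Adj z n, q : G.Walk n u
        have hnuv : n = u ∨ n = v := by
          by_contra hc
          push_neg at hc
          obtain ⟨hnu, hnv⟩ := hc
          have hn2 : ¬ DegGe2 G n := by
            intro hd
            rcases honly n hd with rfl | rfl
            · exact hnu rfl
            · exact hnv rfl
          have huniqn : ∀ a b, G.Adj n a → G.Adj n b → a = b := by
            intro a b ha hb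
            by_contra hne
            exact hn2 ⟨a, b, hne, ha, hb⟩
          rw [Walk.cons_isPath_iff] at hpu
          cases q with
          | nil => exact hnu rfl
          | @cons _ m _ h' q' =>
            have hmz : m = z := huniqn m z h' h.symm
            subst hmz
            exact hpu.2 (by
              rw [Walk.support_cons]
              exact List.mem_cons_of_mem _ q'.start_mem_support)
        obtain ⟨pw, hpw, -⟩ := hG.existsUnique_path z w
        have hn_mem : n ∈ pw.support := by
          cases pw with
          | nil => exact absurd rfl hzw
          | @cons _ m _ h2 q2 =>
            have hmn : m = n := huniq m n h2 h
            subst hmn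
            rw [Walk.support_cons]
            exact List.mem_cons_of_mem _ q2.start_mem_support
        have hlz : l z ≤ treeDist hG l z w :=
          le_treeDist hG l hzw pw hpw pw.start_mem_support
        have hln : l n ≤ treeDist hG l z w :=
          le_treeDist hG l hzw pw hpw hn_mem
        rcases hnuv with rfl | rfl
        · -- n = u, h : G.Adj z u
          refine treeDist_le hG l hzu (Walk.cons h Walk.nil) ?_ ?_
          · simp [Walk.cons_isPath_iff, hzu]
          · intro x hx
            simp only [Walk.support_cons, Walk.support_nil, List.mem_cons,
              List.mem_singleton, List.not_mem_nil, or_false] at hx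
            rcases hx with rfl | rfl
            · exact hlz
            · exact hln
        · -- n = v, h : G.Adj z v
          refine treeDist_le hG l hzu (Walk.cons h (Walk.cons hadj.symm Walk.nil)) ?_ ?_
          · simp [Walk.cons_isPath_iff, hzu, h.ne, Ne.symm huv]
          · intro x hx
            simp only [Walk.support_cons, Walk.support_nil, List.mem_cons,
              List.mem_singleton, List.not_mem_nil, or_false] at hx
            rcases hx with rfl | rfl | rfl
            · exact hlz
            · exact hln
            · exact hluv.trans hln
  exact (treeDist_triangle hG l (Ne.symm hwu) hzu hzw).trans (max_le key le_rfl)
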